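/- arXiv:2512.21936 — 3 statements merged into one kernel-verified Lean document; each statement's English description precedes it below -/
import Mathlib

section
/- Let 1 → K → Γ → A → 1 be a short exact sequence of groups with K finite and A containing a finite index subgroup isomorphic to ℤ^k for some k ≥ 1. Then Γ contains a finite index subgroup isomorphic to ℤ^k. -/
/-- Powers in a class-2 situation: if `b * a = a * b * c` with `c` commuting with
`a` and `b`, then `(a*b)^n = a^n * b^n * c^(n choose 2)`. -/
private lemma aux_comm_pow {G : Type*} [Group G] {a b c : G} (h : b * a = a * b * c)
    (hca : Commute c a) (hcb : Commute c b) (n : ℕ) :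
    (a * b) ^ n = a ^ n * b ^ n * c ^ (n.choose 2) := by
  have hbn : ∀ n : ℕ, b ^ n * a = a * b ^ n * c ^ n := by
    intro n
    induction n with
    | zero => simp
    | succ n ih =>
      have h1 : c ^ n * b = b * c ^ n := ((hcb.pow_left n)).eq
      calc b ^ (n + 1) * a = b ^ n * (b * a) := by rw [pow_succ, mul_assoc]
        _ = b ^ n * a * (b * c) := by rw [h]; simp [mul_assoc]
        _ = a * b ^ n * c ^ n * (b * c) := by rw [ih]
        _ = a * b ^ n * (c ^ n * b) * c := by simp [mul_assoc]
        _ = a * b ^ (n + 1) * c ^ (n + 1) := by rw [h1, pow_succ, pow_succ]; simp [mul_assoc]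
  induction n with
  | zero => simp
  | succ n ih =>
    have h2 : c ^ (n.choose 2) * a = a * c ^ (n.choose 2) := (hca.pow_left _).eq
    have h3 : c ^ (n + n.choose 2) * b = b * c ^ (n + n.choose 2) := (hcb.pow_left _).eq
    have hch : (n + 1).choose 2 = n.choose 2 + n := by
      rw [Nat.choose_succ_succ]; simp [Nat.choose_one_right, Nat.add_comm]
    calc (a * b) ^ (n + 1) = (a * b) ^ n * (a * b) := by rw [pow_succ]
      _ = a ^ n * b ^ n * c ^ (n.choose 2) * (a * b) := by rw [ih]
      _ = a ^ n * (b ^ n * (c ^ (n.choose 2) * a)) * b := by simp [mul_assoc]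
      _ = a ^ n * (b ^ n * (a * c ^ (n.choose 2))) * b := by rw [h2]
      _ = a ^ n * (b ^ n * a) * (c ^ (n.choose 2) * b) := by simp [mul_assoc]
      _ = a ^ n * (a * b ^ n * c ^ n) * (c ^ (n.choose 2) * b) := by rw [hbn]
      _ = a ^ (n + 1) * b ^ n * (c ^ (n + n.choose 2) * b) := by
            rw [pow_succ, pow_add]; simp [mul_assoc]
      _ = a ^ (n + 1) * b ^ n * (b * c ^ (n + n.choose 2)) := by rw [h3]
      _ = a ^ (n + 1) * b ^ (n + 1) * c ^ ((n + 1).choose 2) := by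
            rw [hch, pow_succ, pow_add]; simp only [mul_assoc]
            rw [← pow_add, Nat.add_comm n (n.choose 2), ← mul_assoc (b^n), ← pow_succ]

/-- The subgroup of `r`-th powers in `ℤ^k` (multiplicative) has finite index. -/
private lemma aux_idx (k r : ℕ) (hr : r ≠ 0) :
    ((powMonoidHom r : Multiplicative (Fin k → ℤ) →* Multiplicative (Fin k → ℤ)).range).index ≠ 0 := by
  haveI : NeZero r := ⟨hr⟩
  let π : (Fin k → ℤ) →+ (Fin k → ZMod r) :=
    { toFun := fun v i => ((v i : ℤ) : ZMod r)
      map_zero' := by funext i; simp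
      map_add' := by intro x y; funext i; push_cast; simp }
  let q : Multiplicative (Fin k → ℤ) →* Multiplicative (Fin k → ZMod r) :=
    AddMonoidHom.toMultiplicative π
  have hle : q.ker ≤ (powMonoidHom r : Multiplicative (Fin k → ℤ) →* _).range := by
    intro x hx
    have hx' : ∀ i, ((x.toAdd i : ℤ) : ZMod r) = 0 := by
      intro i
      have : q x = 1 := hx
      have h2 := congrFun (congrArg Multiplicative.toAdd this) i
      simpa [q, π] using h2
    refine ⟨Multiplicative.ofAdd (fun i => x.toAdd i / r), ?_⟩
    have : ∀ i, (r : ℤ) * (x.toAdd i / r) = x.toAdd i := by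
      intro i
      exact Int.mul_ediv_cancel' ((ZMod.intCast_zmod_eq_zero_iff_dvd _ _).mp (hx' i))
    apply Multiplicative.toAdd.injective
    show r • (fun i => x.toAdd i / r) = x.toAdd
    funext i
    simpa [nsmul_eq_mul] using this i
  have hker : q.ker.index ≠ 0 := by
    rw [Subgroup.index_ker]
    exact Nat.card_ne_zero.mpr ⟨⟨1, 1, map_one q⟩, inferInstance⟩
  exact ne_zero_of_dvd_ne_zero hker (Subgroup.index_dvd_of_le hle)

/-- Torsion-freeness of `ℤ^k`. -/
private lemma aux_tf (k r : ℕ) (hr : r ≠ 0) (x : Multiplicative (Fin k → ℤ))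
    (hx : x ^ r = 1) : x = 1 := by
  apply Multiplicative.toAdd.injective
  have : r • x.toAdd = 0 := congrArg Multiplicative.toAdd hx
  funext i
  have : (r : ℤ) * x.toAdd i = 0 := by
    have := congrArg (fun v => v i) this
    simpa [nsmul_eq_mul] using this
  have := mul_eq_zero.mp this
  simp only [Int.natCast_eq_zero] at this
  rcases this with h | h
  · exact absurd h hr
  · exact h
/-- Given a short exact sequence 1 → K → Γ → A → 1 with K finite and
A containing a finite index subgroup isomorphic to ℤ^k (k ≥ 1), Γ contains a finite
index subgroup isomorphic to ℤ^k. -/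
theorem stmt0 {K Γ A : Type*} [Group K] [Group Γ] [Group A] [Finite K]
    (f : K →* Γ) (g : Γ →* A)
    (hf : Function.Injective f) (hg : Function.Surjective g)
    (hexact : f.range = g.ker)
    (k : ℕ) (hk : 1 ≤ k)
    (B : Subgroup A) (hB : B.FiniteIndex)
    (hBiso : Nonempty (B ≃* Multiplicative (Fin k → ℤ))) :
    ∃ B' : Subgroup Γ, B'.FiniteIndex ∧ Nonempty (B' ≃* Multiplicative (Fin k → ℤ)) := by
  obtain ⟨e⟩ := hBiso
  -- B is commutative
  have Bcomm : ∀ x y : B, x * y = y * x := fun x y =>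
    e.injective (by rw [map_mul, map_mul, mul_comm])
  -- the finite kernel F
  have hFfin : Finite g.ker := by
    have h1 : Finite f.range := Set.finite_range f |>.to_subtype
    rwa [hexact] at h1
  set n₀ : ℕ := Nat.card g.ker with hn₀
  have hn₀pos : 0 < n₀ := Nat.card_pos
  have hFpow : ∀ z ∈ g.ker, z ^ n₀ = 1 := by
    intro z hz
    have h1 : (⟨z, hz⟩ : g.ker) ^ n₀ = 1 := pow_card_eq_one'
    have := congrArg (Subtype.val) h1
    simpa using this
  set N : ℕ := 2 * n₀ ^ 2 with hN
  have hNne : N ≠ 0 := by positivity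
  have hn₀N : n₀ ∣ N := ⟨2 * n₀, by rw [hN]; ring⟩
  have hn₀C : n₀ ∣ N.choose 2 := by
    have key : N * (N - 1) = 2 * (n₀ * (n₀ * (N - 1))) := by
      rw [hN]; generalize (2 * n₀ ^ 2 - 1) = M; ring
    rw [Nat.choose_two_right, key, Nat.mul_div_cancel_left _ (by norm_num)]
    exact Dvd.intro _ rfl
  -- the centralizer of F has finite index
  set C : Subgroup Γ := Subgroup.centralizer (g.ker : Set Γ) with hC
  have hCindex : C.index ≠ 0 := by
    haveI : Finite (MulAut g.ker) :=
      Finite.of_injective (fun φ => φ.toEquiv) fun a b h => MulEquiv.toEquiv_injective h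
    have hker : (MulAut.conjNormal : Γ →* MulAut g.ker).ker ≤ C := by
      intro γ hγ
      rw [hC, Subgroup.mem_centralizer_iff]
      intro z hz
      have h1 : ((MulAut.conjNormal γ) ⟨z, hz⟩ : Γ) = ((1 : MulAut g.ker) ⟨z, hz⟩ : Γ) := by
        rw [show MulAut.conjNormal γ = 1 from hγ]
      have h2 : γ * z * γ⁻¹ = z := by simpa [MulAut.conjNormal_apply] using h1
      calc z * γ = γ * z * γ⁻¹ * γ := by rw [h2]
        _ = γ * z := by group
    have hker2 : (MulAut.conjNormal : Γ →* MulAut g.ker).ker.index ≠ 0 := by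
      rw [Subgroup.index_ker]
      exact Nat.card_ne_zero.mpr ⟨⟨1, 1, map_one _⟩, inferInstance⟩
    exact ne_zero_of_dvd_ne_zero hker2 (Subgroup.index_dvd_of_le hker)
  set H₁ : Subgroup Γ := B.comap g ⊓ C with hH₁
  have hH₁C : H₁ ≤ C := inf_le_right
  have hH₁index : H₁.index ≠ 0 := by
    apply Subgroup.index_inf_ne_zero _ hCindex
    rw [Subgroup.index_comap_of_surjective _ hg]
    exact hB.index_ne_zero
  set B₁ : Subgroup A := H₁.map g with hB₁
  have hB₁B : B₁ ≤ B := by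
    rintro _ ⟨x, hx, rfl⟩
    exact hx.1
  have hB₁index : B₁.index ≠ 0 :=
    ne_zero_of_dvd_ne_zero hH₁index (H₁.index_map_dvd hg)
  set m : ℕ := B₁.relIndex B with hm
  have hmne : m ≠ 0 := by
    intro h0
    apply hB₁index
    rw [← Subgroup.relIndex_mul_index hB₁B, ← hm, h0, zero_mul]
  -- m-th powers of B land in B₁
  have hpow_mem : ∀ b : B, (b : A) ^ m ∈ B₁ := by
    haveI : (B₁.subgroupOf B).Normal := by
      constructor
      intro n hn x
      rwa [Bcomm x n, mul_inv_cancel_right]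
    intro b
    have h1 := Subgroup.pow_index_mem (B₁.subgroupOf B) b
    rw [Subgroup.mem_subgroupOf] at h1
    simpa [hm, Subgroup.relIndex] using h1
  have hchoice : ∀ b : B, ∃ h, h ∈ H₁ ∧ g h = (b : A) ^ m := by
    intro b
    obtain ⟨x, hx, hgx⟩ := hpow_mem b
    exact ⟨x, hx, hgx⟩
  choose ch hch1 hch2 using hchoice
  -- elements of H₁ with the same image have the same N-th power
  have hkey : ∀ x y : Γ, x ∈ H₁ → y ∈ H₁ → g x = g y → x ^ N = y ^ N := by
    intro x y hx hy hxy
    have hz : x⁻¹ * y ∈ g.ker := by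
      rw [MonoidHom.mem_ker, map_mul, map_inv, hxy, inv_mul_cancel]
    have hcomm : Commute x (x⁻¹ * y) :=
      (Subgroup.mem_centralizer_iff.mp (hH₁C hx) _ hz).symm
    have hy' : y = x * (x⁻¹ * y) := by group
    obtain ⟨d, hd⟩ := hn₀N
    have h6 : (x⁻¹ * y) ^ N = 1 := by rw [hd, pow_mul, hFpow _ hz, one_pow]
    rw [hy', hcomm.mul_pow, h6, mul_one]
  have hψmul : ∀ b b' : B, ch (b * b') ^ N = ch b ^ N * ch b' ^ N := by
    intro b b'
    have hx := hch1 b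
    have hy := hch1 b'
    have hcoecomm : Commute (b : A) (b' : A) := congrArg Subtype.val (Bcomm b b')
    have hgxy : g (ch b * ch b') = ((b * b' : B) : A) ^ m := by
      rw [map_mul, hch2, hch2]
      push_cast
      rw [hcoecomm.mul_pow]
    have h0 : ch (b * b') ^ N = (ch b * ch b') ^ N :=
      hkey _ _ (hch1 (b * b')) (mul_mem hx hy) (by rw [hch2 (b * b'), hgxy])
    set x := ch b
    set y := ch b'
    have hcF : y⁻¹ * x⁻¹ * y * x ∈ g.ker := by
      have h1 : g x * g y = g y * g x := by
        rw [hch2, hch2]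
        exact (hcoecomm.pow_pow m m)
      rw [MonoidHom.mem_ker]
      simp only [map_mul, map_inv]
      calc (g y)⁻¹ * (g x)⁻¹ * g y * g x = (g x * g y)⁻¹ * g y * g x := by
            rw [mul_inv_rev]
        _ = (g y * g x)⁻¹ * g y * g x := by rw [h1]
        _ = 1 := by group
    have hxy : y * x = x * y * (y⁻¹ * x⁻¹ * y * x) := by group
    have hcx : Commute (y⁻¹ * x⁻¹ * y * x) x :=
      Subgroup.mem_centralizer_iff.mp (hH₁C hx) _ hcF
    have hcy : Commute (y⁻¹ * x⁻¹ * y * x) y :=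
      Subgroup.mem_centralizer_iff.mp (hH₁C hy) _ hcF
    obtain ⟨d, hd⟩ := hn₀C
    have h6 : (y⁻¹ * x⁻¹ * y * x) ^ (N.choose 2) = 1 := by
      rw [hd, pow_mul, hFpow _ hcF, one_pow]
    rw [h0, aux_comm_pow hxy hcx hcy N, h6, mul_one]
  set Ψ : B →* Γ := MonoidHom.mk' (fun b => ch b ^ N) hψmul with hΨ
  have hΨg : ∀ b : B, g (Ψ b) = (b : A) ^ (m * N) := by
    intro b
    show g (ch b ^ N) = _
    rw [map_pow, hch2, ← pow_mul]
  have hmN : m * N ≠ 0 := mul_ne_zero hmne hNne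
  have hΨinj : Function.Injective Ψ := by
    intro b b' hbb'
    have h1 : (b : A) ^ (m * N) = (b' : A) ^ (m * N) := by
      rw [← hΨg, ← hΨg, hbb']
    have h2 : (b : B) ^ (m * N) = b' ^ (m * N) := by
      apply Subtype.ext
      push_cast
      exact h1
    have h3 : (e b) ^ (m * N) = (e b') ^ (m * N) := by
      rw [← map_pow, ← map_pow, h2]
    have h4 : (e b * (e b')⁻¹) ^ (m * N) = 1 := by
      rw [mul_pow, h3, ← mul_pow, mul_inv_cancel, one_pow]
    have h5 := aux_tf k (m * N) hmN _ h4
    apply e.injective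
    rw [← mul_inv_eq_one]
    exact h5
  set B' : Subgroup Γ := Ψ.range with hB'
  refine ⟨B', ?_, ⟨(MonoidHom.ofInjective hΨinj).symm.trans e⟩⟩
  -- finite index of B'
  set φ : B →* A := g.comp Ψ with hφdef
  have hφ : ∀ b : B, φ b = (b : A) ^ (m * N) := hΨg
  have hφrangeB : φ.range ≤ B := by
    rintro _ ⟨b, rfl⟩
    rw [hφ]
    exact pow_mem b.2 _
  have hrel1 : (φ.range).relIndex B ≠ 0 := by
    have hτmul : ∀ b b' : B, (b * b') ^ (m * N) = b ^ (m * N) * b' ^ (m * N) := fun b b' =>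
      Commute.mul_pow (Bcomm b b') _
    set τ : B →* B := MonoidHom.mk' (fun b => b ^ (m * N)) hτmul with hτdef
    have hτ : τ.range ≤ φ.range.subgroupOf B := by
      rintro _ ⟨b, rfl⟩
      rw [Subgroup.mem_subgroupOf]
      refine ⟨b, ?_⟩
      rw [hφ]
      show ((b ^ (m * N) : B) : A) = (b : A) ^ (m * N)
      push_cast
      rfl
    have hτidx : τ.range.index ≠ 0 := by
      have hcomp : (powMonoidHom (m * N) : Multiplicative (Fin k → ℤ) →* _).comp e.toMonoidHom
          = e.toMonoidHom.comp τ := by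
        ext1 b
        show (e b) ^ (m * N) = e (b ^ (m * N))
        rw [map_pow]
      have hmap : (τ.range.map e.toMonoidHom).index ≠ 0 := by
        rw [MonoidHom.map_range, ← hcomp, MonoidHom.range_comp,
          MonoidHom.range_eq_top_of_surjective _ e.surjective, ← MonoidHom.range_eq_map]
        exact aux_idx k (m * N) hmN
      rwa [Subgroup.index_map_of_injective _ e.injective,
        MonoidHom.range_eq_top_of_surjective e.toMonoidHom e.surjective, Subgroup.index_top, mul_one]
        at hmap
    exact ne_zero_of_dvd_ne_zero hτidx (Subgroup.index_dvd_of_le hτ)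
  have hφidx : φ.range.index ≠ 0 := by
    rw [← Subgroup.relIndex_mul_index hφrangeB]
    exact mul_ne_zero hrel1 hB.index_ne_zero
  set P : Subgroup Γ := φ.range.comap g with hP
  have hPidx : P.index ≠ 0 := by
    rw [hP, Subgroup.index_comap_of_surjective _ hg]
    exact hφidx
  have hB'P : B' ≤ P := by
    rintro _ ⟨b, rfl⟩
    exact ⟨b, rfl⟩
  have hFP : ∀ z : Γ, z ∈ g.ker → z ∈ P := by
    intro z hz
    show g z ∈ φ.range
    rw [hz]
    exact one_mem _
  have hrel2 : B'.relIndex P ≠ 0 := by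
    have hsurj2 : Function.Surjective
        (fun z : g.ker => (QuotientGroup.mk (⟨(z : Γ), hFP z z.2⟩ : P)
          : P ⧸ B'.subgroupOf P)) := by
      intro q
      induction q using QuotientGroup.induction_on with
      | H p =>
        obtain ⟨b, hb⟩ := p.2
        have hΨbP : Ψ b ∈ P := hB'P ⟨b, rfl⟩
        have hzker : (p : Γ) * (Ψ b)⁻¹ ∈ g.ker := by
          rw [MonoidHom.mem_ker, map_mul, map_inv]
          have : g (Ψ b) = g (p : Γ) := hb
          rw [this, mul_inv_cancel]
        refine ⟨⟨(p : Γ) * (Ψ b)⁻¹, hzker⟩, ?_⟩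
        rw [QuotientGroup.eq, Subgroup.mem_subgroupOf]
        show ((⟨(p : Γ) * (Ψ b)⁻¹, hFP _ hzker⟩ : P)⁻¹ * p : Γ) ∈ B'
        show ((p : Γ) * (Ψ b)⁻¹)⁻¹ * (p : Γ) ∈ B'
        have : ((p : Γ) * (Ψ b)⁻¹)⁻¹ * (p : Γ) = Ψ b := by group
        rw [this]
        exact ⟨b, rfl⟩
    haveI : Finite (P ⧸ B'.subgroupOf P) := Finite.of_surjective _ hsurj2
    exact Nat.card_ne_zero.mpr ⟨⟨QuotientGroup.mk 1⟩, inferInstance⟩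
  constructor
  rw [← Subgroup.relIndex_mul_index hB'P]
  exact mul_ne_zero hrel2 hPidx
end

section
/- Suppose Γ acts by isometries on metric spaces Y₁, …, Y_D via actions ρ₁, …, ρ_D, each of which is acylindrical. Then the diagonal action of Γ on the product Y₁ × ⋯ × Y_D with the ℓ^∞-product metric is acylindrical. -/
/-- The joint ε-coarse stabilizer Set_ε{x,y}. -/
def setEps {Γ Y : Type*} [Group Γ] [MetricSpace Y] (ρ : Γ →* (Y ≃ᵢ Y)) (ε : ℝ)
    (x y : Y) : Set Γ :=
  {g : Γ | dist (ρ g x) x ≤ ε ∧ dist (ρ g y) y ≤ ε}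

/-- An acylindrical action. -/
def IsAcylindrical {Γ Y : Type*} [Group Γ] [MetricSpace Y] (ρ : Γ →* (Y ≃ᵢ Y)) : Prop :=
  ∀ ε > (0:ℝ), ∃ R : ℝ, ∃ N : ℕ, ∀ x y : Y, R ≤ dist x y →
    (setEps ρ ε x y).Finite ∧ (setEps ρ ε x y).ncard ≤ N

/-!
Coarse stabilizers of the diagonal action are contained in the coarse stabilizers of each
factor, since the sup metric dominates every coordinate distance. If `x` and `y` are far apart
in the sup metric, they are far apart in some coordinate `i`, so acylindricity of `ρ i` bounds
the diagonal coarse stabilizer; taking the maximum of the finitely many constants `R i` and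
`N i` makes the bounds uniform.
-/

def IsometryEquiv.piCongrRight {ι : Type*} [Fintype ι] {α β : ι → Type*}
    [∀ i, PseudoEMetricSpace (α i)] [∀ i, PseudoEMetricSpace (β i)] (e : ∀ i, α i ≃ᵢ β i) :
    (∀ i, α i) ≃ᵢ (∀ i, β i) where
  toEquiv := Equiv.piCongrRight fun i => (e i).toEquiv
  isometry_toFun := Isometry.piMap _ fun i => (e i).isometry

@[simp]
theorem IsometryEquiv.piCongrRight_apply {ι : Type*} [Fintype ι] {α β : ι → Type*}
    [∀ i, PseudoEMetricSpace (α i)] [∀ i, PseudoEMetricSpace (β i)] (e : ∀ i, α i ≃ᵢ β i)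
    (x : ∀ i, α i) (i : ι) : piCongrRight e x i = e i (x i) :=
  rfl

theorem exists_le_dist_apply_of_le_dist {ι : Type*} [Fintype ι] {X : ι → Type*}
    [∀ i, PseudoMetricSpace (X i)] {x y : ∀ i, X i} {r : ℝ} (hr : 0 < r) (h : r ≤ dist x y) :
    ∃ i, r ≤ dist (x i) (y i) := by
  by_contra! hlt
  exact h.not_gt ((dist_pi_lt_iff hr).2 hlt)

section Diagonal

variable {Γ ι : Type*} [Group Γ] [Fintype ι] {Y : ι → Type*} [∀ i, MetricSpace (Y i)]

def diagonalAction (ρ : ∀ i, Γ →* (Y i ≃ᵢ Y i)) : Γ →* ((∀ i, Y i) ≃ᵢ (∀ i, Y i)) where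
  toFun g := IsometryEquiv.piCongrRight fun i => ρ i g
  map_one' := by ext; simp
  map_mul' _ _ := by ext; simp

theorem setEps_diagonalAction_subset (ρ : ∀ i, Γ →* (Y i ≃ᵢ Y i)) (ε : ℝ) (x y : ∀ i, Y i)
    (i : ι) : setEps (diagonalAction ρ) ε x y ⊆ setEps (ρ i) ε (x i) (y i) :=
  fun _ hg => ⟨(dist_le_pi_dist _ _ i).trans hg.1, (dist_le_pi_dist _ _ i).trans hg.2⟩

theorem IsAcylindrical.pi {ρ : ∀ i, Γ →* (Y i ≃ᵢ Y i)} (hacyl : ∀ i, IsAcylindrical (ρ i)) :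
    IsAcylindrical (diagonalAction ρ) := by
  intro ε hε
  choose R N hRN using fun i => hacyl i ε hε
  obtain ⟨Rmax, hRmax⟩ := Finite.exists_le R
  obtain ⟨Nmax, hNmax⟩ := Finite.exists_le N
  refine ⟨max Rmax 1, Nmax, fun x y hxy => ?_⟩
  -- the `max _ 1` keeps the radius positive, as `dist_pi_lt_iff` requires
  obtain ⟨i, hi⟩ := exists_le_dist_apply_of_le_dist (by positivity) hxy
  obtain ⟨hfin, hcard⟩ :=
    hRN i (x i) (y i) (((hRmax i).trans (le_max_left _ _)).trans hi)
  have hsub := setEps_diagonalAction_subset ρ ε x y i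
  exact ⟨hfin.subset hsub, (Set.ncard_le_ncard hsub hfin).trans (hcard.trans (hNmax i))⟩

end Diagonal

/-- The diagonal action on a finite product (with the ℓ^∞-product metric,
i.e. the sup metric on the pi type) of acylindrical actions is acylindrical. -/
theorem stmt8 {Γ : Type*} [Group Γ] (D : ℕ) (Y : Fin D → Type*)
    [∀ i, MetricSpace (Y i)] (ρ : ∀ i, Γ →* (Y i ≃ᵢ Y i))
    (hacyl : ∀ i, IsAcylindrical (ρ i)) :
    ∀ ε > (0:ℝ), ∃ R : ℝ, ∃ N : ℕ, ∀ x y : (∀ i, Y i), R ≤ dist x y →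
      {g : Γ | dist (fun i => ρ i g (x i)) x ≤ ε ∧
        dist (fun i => ρ i g (y i)) y ≤ ε}.Finite ∧
      {g : Γ | dist (fun i => ρ i g (x i)) x ≤ ε ∧
        dist (fun i => ρ i g (y i)) y ≤ ε}.ncard ≤ N :=
  -- the two sets are `setEps (diagonalAction ρ) ε x y` unfolded
  IsAcylindrical.pi hacyl
end

section
/- Let Γ act by isometries on metric spaces Y and Z with homomorphisms ρ and σ, and α ∈ Isom(Y), and suppose the diagonal action Δ(ρ, ρ_α, σ) on Y × Y × Z (ℓ^∞ metric) is acylindrical, where ρ_α(g) = αρ(g)α⁻¹. Then the diagonal action Δ(ρ, σ) on Y × Z is acylindrical. -/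
section

variable {Γ Y Z : Type*} [Group Γ] [MetricSpace Y] [MetricSpace Z]

/-- Joint ε-coarse stabilizer for the diagonal action Δ(ρ,σ) on Y × Z (max metric). -/
def setEps2 (ρ : Γ →* (Y ≃ᵢ Y)) (σ : Γ →* (Z ≃ᵢ Z)) (ε : ℝ) (p q : Y × Z) : Set Γ :=
  {g : Γ | dist ((ρ g p.1, σ g p.2) : Y × Z) p ≤ ε ∧
    dist ((ρ g q.1, σ g q.2) : Y × Z) q ≤ ε}

/-- Joint ε-coarse stabilizer for the diagonal action Δ(ρ, ρ_α, σ) on Y × Y × Z, where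
ρ_α(g) = α ρ(g) α⁻¹. -/
def setEps3 (ρ : Γ →* (Y ≃ᵢ Y)) (α : Y ≃ᵢ Y) (σ : Γ →* (Z ≃ᵢ Z)) (ε : ℝ)
    (p q : Y × Y × Z) : Set Γ :=
  {g : Γ | dist ((ρ g p.1, α (ρ g (α.symm p.2.1)), σ g p.2.2) : Y × Y × Z) p ≤ ε ∧
    dist ((ρ g q.1, α (ρ g (α.symm q.2.1)), σ g q.2.2) : Y × Y × Z) q ≤ ε}

/-- Acylindricity of the diagonal action on Y × Z. -/
def IsAcylindrical2 (ρ : Γ →* (Y ≃ᵢ Y)) (σ : Γ →* (Z ≃ᵢ Z)) : Prop :=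
  ∀ ε > (0:ℝ), ∃ R : ℝ, ∃ N : ℕ, ∀ p q : Y × Z, R ≤ dist p q →
    (setEps2 ρ σ ε p q).Finite ∧ (setEps2 ρ σ ε p q).ncard ≤ N

/-- Acylindricity of the diagonal action on Y × Y × Z. -/
def IsAcylindrical3 (ρ : Γ →* (Y ≃ᵢ Y)) (α : Y ≃ᵢ Y) (σ : Γ →* (Z ≃ᵢ Z)) : Prop :=
  ∀ ε > (0:ℝ), ∃ R : ℝ, ∃ N : ℕ, ∀ p q : Y × Y × Z, R ≤ dist p q →
    (setEps3 ρ α σ ε p q).Finite ∧ (setEps3 ρ α σ ε p q).ncard ≤ N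

def graphEmbed {W : Type*} (f : Y → W) (p : Y × Z) : Y × W × Z :=
  (p.1, f p.1, p.2)

theorem Isometry.graphEmbed {W : Type*} [PseudoMetricSpace W] {f : Y → W}
    (hf : Isometry f) : Isometry (graphEmbed f : Y × Z → Y × W × Z) :=
  Isometry.of_dist_eq fun p q => by
    simp only [_root_.graphEmbed, Prod.dist_eq, hf.dist_eq, ← max_assoc, max_self]

theorem setEps3_graphEmbed (ρ : Γ →* (Y ≃ᵢ Y)) (α : Y ≃ᵢ Y) (σ : Γ →* (Z ≃ᵢ Z)) (ε : ℝ)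
    (p q : Y × Z) :
    setEps3 ρ α σ ε (graphEmbed α p) (graphEmbed α q) = setEps2 ρ σ ε p q := by
  have hequivariant : ∀ (g : Γ) (x : Y × Z),
      ((ρ g (graphEmbed α x).1, α (ρ g (α.symm (graphEmbed α x).2.1)),
        σ g (graphEmbed α x).2.2) : Y × Y × Z) = graphEmbed α (ρ g x.1, σ g x.2) := by
    intro g x
    simp only [graphEmbed, IsometryEquiv.symm_apply_apply]
  ext g
  simp only [setEps3, setEps2, Set.mem_ofPred_eq, hequivariant,
    (α.isometry.graphEmbed (Z := Z)).dist_eq]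

/-- If the duplicated diagonal action Δ(ρ, ρ_α, σ) on Y × Y × Z is
acylindrical then so is the diagonal action Δ(ρ,σ) on Y × Z. -/
theorem stmt18 (ρ : Γ →* (Y ≃ᵢ Y)) (σ : Γ →* (Z ≃ᵢ Z)) (α : Y ≃ᵢ Y)
    (h : IsAcylindrical3 ρ α σ) : IsAcylindrical2 ρ σ := by
  intro ε hε
  obtain ⟨R, N, hRN⟩ := h ε hε
  refine ⟨R, N, fun p q hpq => ?_⟩
  rw [← setEps3_graphEmbed ρ α σ]
  exact hRN _ _ (by rwa [α.isometry.graphEmbed.dist_eq])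

end
end
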